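/- Let D be a finitely generated free abelian group and S a D-graded commutative ring which possesses a homogeneous unit of degree d for every d ∈ D. Then there is an S_0-algebra isomorphism S ≅ S_0[D] (the group algebra AddMonoidAlgebra S_0 D) which carries S_d onto S_0·χ^d for every d ∈ D. In particular, S is a free S_0-module and the grading is trivialized over S_0. -/

import Mathlib

/-!
The pairs `(d, u)` with `u` a unit of `S` homogeneous of degree `d` form a subgroup of
`D × Sˣ` whose projection to `D` is onto. As `D` is free, hence projective, this projection
has a section, i.e. a character `χ : D → Sˣ` with `χ d ∈ S_d` (using pairs rather than a degree
map on homogeneous units avoids having to assume `S ≠ 0`). The `S_0`-algebra map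
`S_0[D] → S`, `χ^d ↦ χ d`, is then an isomorphism respecting the gradings, because
multiplication by the unit `χ d` maps `S_0` onto `S_d`.
-/

open DirectSum

namespace GradedRing

variable {ι R : Type*} [AddCommGroup ι] [DecidableEq ι] [CommRing R]
  (𝒜 : ι → AddSubgroup R) [GradedRing 𝒜]

theorem coe_inv_mem_neg {d : ι} {u : Rˣ} (hu : (u : R) ∈ 𝒜 d) : ((u⁻¹ : Rˣ) : R) ∈ 𝒜 (-d) := by
  have h : (u : R) * (decompose 𝒜 ((u⁻¹ : Rˣ) : R) (-d) : R) = 1 := by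
    rw [← coe_decompose_mul_add_of_left_mem 𝒜 hu, add_neg_cancel, Units.mul_inv,
      decompose_of_mem_same 𝒜 SetLike.GradedOne.one_mem]
  rw [Units.inv_eq_of_mul_eq_one_right h]
  exact SetLike.coe_mem _

def homogeneousUnits : AddSubgroup (ι × Additive Rˣ) where
  carrier := {p | ((p.2.toMul : Rˣ) : R) ∈ 𝒜 p.1}
  zero_mem' := show (1 : R) ∈ 𝒜 0 from SetLike.GradedOne.one_mem
  add_mem' hp hq := SetLike.GradedMul.mul_mem (A := 𝒜) hp hq
  neg_mem' := coe_inv_mem_neg 𝒜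

theorem exists_monoidHom_units_mem [Module.Free ℤ ι] (h : ∀ d : ι, ∃ u : Rˣ, (u : R) ∈ 𝒜 d) :
    ∃ χ : Multiplicative ι →* Rˣ, ∀ d : ι, (χ (.ofAdd d) : R) ∈ 𝒜 d := by
  let deg : homogeneousUnits 𝒜 →ₗ[ℤ] ι :=
    ((AddMonoidHom.fst ι (Additive Rˣ)).comp (homogeneousUnits 𝒜).subtype).toIntLinearMap
  have hdeg : Function.Surjective deg := fun d ↦
    let ⟨u, hu⟩ := h d
    ⟨⟨(d, .ofMul u), hu⟩, rfl⟩
  obtain ⟨s, hs⟩ := Module.projective_lifting_property deg LinearMap.id hdeg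
  refine ⟨AddMonoidHom.toMultiplicativeLeft
    ((AddMonoidHom.snd _ _).comp ((homogeneousUnits 𝒜).subtype.comp s.toAddMonoidHom)), fun d ↦ ?_⟩
  have hd : (s d : ι × Additive Rˣ).1 = d := LinearMap.congr_fun hs d
  have hmem : (((s d : ι × Additive Rˣ).2.toMul : Rˣ) : R) ∈ 𝒜 (s d : ι × Additive Rˣ).1 :=
    (s d).2
  rwa [hd] at hmem

section liftUnits

variable (χ : Multiplicative ι →* Rˣ)

noncomputable def liftUnits : AddMonoidAlgebra (𝒜 0) ι →ₐ[𝒜 0] R :=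
  AddMonoidAlgebra.lift _ _ _ ((Units.coeHom R).comp χ)

theorem liftUnits_single (d : ι) (a : 𝒜 0) :
    liftUnits 𝒜 χ (AddMonoidAlgebra.single d a) = a * χ (.ofAdd d) := by
  simp [liftUnits, AddMonoidAlgebra.lift_single, Algebra.smul_def]

theorem liftUnits_single_zero (a : 𝒜 0) : liftUnits 𝒜 χ (AddMonoidAlgebra.single 0 a) = a := by
  rw [liftUnits_single, ofAdd_zero, map_one, Units.val_one, mul_one]

variable {𝒜 χ} (hχ : ∀ d : ι, (χ (.ofAdd d) : R) ∈ 𝒜 d)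
include hχ

theorem liftUnits_single_mem (d : ι) (a : 𝒜 0) :
    liftUnits 𝒜 χ (AddMonoidAlgebra.single d a) ∈ 𝒜 d := by
  rw [liftUnits_single]
  simpa only [zero_add] using SetLike.GradedMul.mul_mem a.2 (hχ d)

theorem coe_decompose_liftUnits (p : AddMonoidAlgebra (𝒜 0) ι) (e : ι) :
    (decompose 𝒜 (liftUnits 𝒜 χ p) e : R) = p.coeff e * χ (.ofAdd e) := by
  induction p using AddMonoidAlgebra.induction_linear with
  | zero => simp
  | add p q hp hq => simp [hp, hq, add_mul]
  | single d a =>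
    obtain rfl | hde := eq_or_ne d e
    · rw [decompose_of_mem_same 𝒜 (liftUnits_single_mem hχ d a), liftUnits_single]
      simp
    · rw [decompose_of_mem_ne 𝒜 (liftUnits_single_mem hχ d a) hde]
      simp [AddMonoidAlgebra.coeff_single, Finsupp.single_eq_of_ne' hde]

theorem liftUnits_injective : Function.Injective (liftUnits 𝒜 χ) := by
  refine (injective_iff_map_eq_zero _).mpr fun p hp ↦ ?_
  ext e
  have h := coe_decompose_liftUnits hχ p e
  rwa [hp, decompose_zero, DirectSum.zero_apply, ZeroMemClass.coe_zero, eq_comm,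
    Units.mul_left_eq_zero] at h

theorem exists_liftUnits_single_eq {d : ι} {x : R} (hx : x ∈ 𝒜 d) :
    ∃ a : 𝒜 0, liftUnits 𝒜 χ (AddMonoidAlgebra.single d a) = x := by
  have ha : x * ((χ (.ofAdd d))⁻¹ : Rˣ) ∈ 𝒜 0 := by
    rw [← add_neg_cancel d]
    exact SetLike.GradedMul.mul_mem hx (coe_inv_mem_neg 𝒜 (hχ d))
  exact ⟨⟨_, ha⟩, by simp [liftUnits_single]⟩

theorem mem_iff_exists_liftUnits_single_eq {d : ι} {x : R} :
    x ∈ 𝒜 d ↔ ∃ a : 𝒜 0, liftUnits 𝒜 χ (AddMonoidAlgebra.single d a) = x :=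
  ⟨exists_liftUnits_single_eq hχ, fun ⟨a, ha⟩ ↦ ha ▸ liftUnits_single_mem hχ d a⟩

theorem liftUnits_surjective : Function.Surjective (liftUnits 𝒜 χ) := by
  intro x
  induction x using DirectSum.Decomposition.inductionOn 𝒜 with
  | zero => exact ⟨0, map_zero _⟩
  | homogeneous x =>
    obtain ⟨a, ha⟩ := exists_liftUnits_single_eq hχ x.2
    exact ⟨_, ha⟩
  | add x y hx hy =>
    obtain ⟨p, rfl⟩ := hx
    obtain ⟨q, rfl⟩ := hy
    exact ⟨p + q, map_add _ p q⟩

end liftUnits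

end GradedRing

theorem stmt_10_general {D S : Type*} [AddCommGroup D] [Module.Free ℤ D]
    [DecidableEq D] [CommRing S]
    (𝒜 : D → AddSubgroup S) [GradedRing 𝒜]
    (hunits : ∀ d : D, ∃ u : Sˣ, (u : S) ∈ 𝒜 d) :
    ∃ e : S ≃+* AddMonoidAlgebra (𝒜 0) D,
      (∀ a : (𝒜 0), e (a : S) = AddMonoidAlgebra.single (0 : D) a) ∧
      ∀ (d : D) (s : S), s ∈ 𝒜 d ↔ ∃ a : (𝒜 0), e s = AddMonoidAlgebra.single d a := by
  obtain ⟨χ, hχ⟩ := GradedRing.exists_monoidHom_units_mem 𝒜 hunits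
  let φ := AlgEquiv.ofBijective (GradedRing.liftUnits 𝒜 χ)
    ⟨GradedRing.liftUnits_injective hχ, GradedRing.liftUnits_surjective hχ⟩
  refine ⟨φ.toRingEquiv.symm, fun a ↦ ?_, fun d s ↦ ?_⟩
  · rw [RingEquiv.symm_apply_eq]
    exact (GradedRing.liftUnits_single_zero 𝒜 χ a).symm
  · simp_rw [GradedRing.mem_iff_exists_liftUnits_single_eq hχ, RingEquiv.symm_apply_eq, eq_comm]
    rfl

/-- Let `D` be a finitely generated free abelian group and `S` a `D`-graded
commutative ring possessing a homogeneous unit of degree `d` for every `d ∈ D`.  Then there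
is an `S_0`-algebra isomorphism `S ≅ S_0[D]` carrying `S_d` onto `S_0 · χ^d` for every `d`;
in particular the grading is trivialized over `S_0`. -/
theorem stmt_10 {D S : Type*} [AddCommGroup D] [AddGroup.FG D] [Module.Free ℤ D]
    [DecidableEq D] [CommRing S]
    (𝒜 : D → AddSubgroup S) [GradedRing 𝒜]
    (hunits : ∀ d : D, ∃ u : Sˣ, (u : S) ∈ 𝒜 d) :
    ∃ e : S ≃+* AddMonoidAlgebra (𝒜 0) D,
      (∀ a : (𝒜 0), e (a : S) = AddMonoidAlgebra.single (0 : D) a) ∧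
      ∀ (d : D) (s : S), s ∈ 𝒜 d ↔ ∃ a : (𝒜 0), e s = AddMonoidAlgebra.single d a :=
  stmt_10_general 𝒜 hunits
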